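/- Let (V,C,u) be an order unit space with a strictly convex cone, g : C° → C° a bijective antihomogeneous order-antimorphism, and x ∈ C°. Let G_x : V → V be a linear bijection with G_x(z) = −lim_{t→0} (g(x+tz) − g(x))/t for all z ∈ V, and let S_x = G_x⁻¹ ∘ g : C° → C°. Then x is the unique fixed point of S_x in C°: if y ∈ C° satisfies S_x(y) = y, then y = x. -/

import Mathlib

open Set Filter Topology

variable {V : Type*} [NormedAddCommGroup V] [NormedSpace ℝ V]

/-- `(V, C, u)` is an order unit space whose norm is the order unit norm of `(C, u)`:
`C` is an Archimedean cone and `u` is an order unit of it. -/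
structure IsOrderUnitSpace (C : Set V) (u : V) : Prop where
  convex : Convex ℝ C
  smul_mem : ∀ l : ℝ, 0 ≤ l → ∀ x ∈ C, l • x ∈ C
  salient : C ∩ (-C) = {0}
  archimedean : ∀ x : V, ∀ y ∈ C, (∀ n : ℕ, 0 < n → y - (n : ℝ) • x ∈ C) → -x ∈ C
  unit_mem : u ∈ C
  order_unit : ∀ x : V, ∃ l : ℝ, 0 ≤ l ∧ l • u - x ∈ C
  norm_eq : ∀ x : V, ‖x‖ = sInf {l : ℝ | 0 < l ∧ x + l • u ∈ C ∧ l • u - x ∈ C}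

/-- `M(x/y) = inf {β > 0 : x ≤_C β y}`. -/
noncomputable def Mratio (C : Set V) (x y : V) : ℝ :=
  sInf {b : ℝ | 0 < b ∧ b • y - x ∈ C}

/-- The cone `C` is strictly convex: the open segment between any two linearly
independent boundary points lies in the interior. -/
def StrictlyConvexCone (C : Set V) : Prop :=
  ∀ x ∈ frontier C, ∀ y ∈ frontier C, LinearIndependent ℝ ![x, y] →
    openSegment ℝ x y ⊆ interior C

/-- `g` is antihomogeneous on the interior of `C`: `g (λ x) = λ⁻¹ g x`. -/
def IsAntihomogeneous (C : Set V) (g : V → V) : Prop :=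
  ∀ l : ℝ, 0 < l → ∀ x ∈ interior C, g (l • x) = l⁻¹ • g x

/-- `g` is an order-antimorphism of the interior of `C`: `x ≤_C y ↔ g y ≤_C g x`. -/
def IsOrderAntimorphism (C : Set V) (g : V → V) : Prop :=
  ∀ x ∈ interior C, ∀ y ∈ interior C, (y - x ∈ C ↔ g x - g y ∈ C)

/-- A state of `(V, C, u)`: a positive linear functional with `φ u = 1`. -/
def IsState (C : Set V) (u : V) (φ : V →ₗ[ℝ] ℝ) : Prop :=
  (∀ x ∈ C, 0 ≤ φ x) ∧ φ u = 1

/-!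
Let `β = M(x/y)`, so that `x ≤ β y`. Order reversal and antihomogeneity give
`M(g y / g x) = M(x/y) = β`, so `p = β g x - g y` lies on the boundary of `C` and is annihilated
by a positive functional `f` with `f (g y) > 0`. Along the curve
`t ↦ (β + t) g (x + t y) - g y`, which stays in `C` because `x + t y ≤ (β + t) y`, the function
`f` has a local minimum `0` at `t = 0`; its derivative there is `f (g x - β G y)` and must vanish.
Since `G x = g x` (differentiate `g ((1 + t) x) = (1 + t)⁻¹ g x`) and `G y = g y` (the fixed
point equation), the two relations `f (β g x) = f (g y)` and `f (g x) = β f (g y)` force `β = 1`,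
i.e. `x ≤ y`. Finally `G` is positive, being minus the derivative of an order-reversing map, so
`g y - g x = G (y - x) ∈ C`, i.e. `y ≤ x`.
-/

variable {C : Set V} {u : V}

namespace IsOrderUnitSpace

theorem add_mem (hC : IsOrderUnitSpace C u) {a b : V} (ha : a ∈ C) (hb : b ∈ C) :
    a + b ∈ C := by
  convert hC.smul_mem 2 zero_le_two _
    (hC.convex ha hb (by norm_num : (0 : ℝ) ≤ 1 / 2) (by norm_num : (0 : ℝ) ≤ 1 / 2)
      (by norm_num)) using 1
  module

theorem zero_mem (hC : IsOrderUnitSpace C u) : (0 : V) ∈ C := by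
  simpa using hC.smul_mem 0 le_rfl u hC.unit_mem

theorem add_smul_mem (hC : IsOrderUnitSpace C u) {z : V} (hz : z ∈ C) {c : ℝ} (hc : 0 ≤ c) :
    z + c • u ∈ C :=
  hC.add_mem hz (hC.smul_mem c hc u hC.unit_mem)

theorem smul_mem_iff (hC : IsOrderUnitSpace C u) {c : ℝ} (hc : 0 < c) {z : V} :
    c • z ∈ C ↔ z ∈ C :=
  ⟨fun h => by simpa [hc.ne'] using hC.smul_mem c⁻¹ (inv_nonneg.2 hc.le) _ h,
    hC.smul_mem c hc.le z⟩

theorem eq_of_sub_mem (hC : IsOrderUnitSpace C u) {a b : V} (hab : a - b ∈ C)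
    (hba : b - a ∈ C) : a = b := by
  have h : a - b ∈ C ∩ -C := ⟨hab, by simpa using hba⟩
  rw [hC.salient] at h
  exact sub_eq_zero.1 h

theorem smul_sub_mem_of_norm_lt (hC : IsOrderUnitSpace C u) (a : V) {l : ℝ} (h : ‖a‖ < l) :
    l • u - a ∈ C := by
  obtain ⟨l₁, hl₁, h₁⟩ := hC.order_unit a
  obtain ⟨l₂, hl₂, h₂⟩ := hC.order_unit (-a)
  have hne : {l : ℝ | 0 < l ∧ a + l • u ∈ C ∧ l • u - a ∈ C}.Nonempty := by
    refine ⟨l₁ + l₂ + 1, by positivity, ?_, ?_⟩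
    · convert hC.add_smul_mem h₂ (c := l₁ + 1) (by positivity) using 1
      module
    · convert hC.add_smul_mem h₁ (c := l₂ + 1) (by positivity) using 1
      module
  rw [hC.norm_eq a] at h
  obtain ⟨s, hs, hsl⟩ := exists_lt_of_csInf_lt hne h
  convert hC.add_smul_mem hs.2.2 (c := l - s) (by linarith) using 1
  module

theorem mem_interior_iff (hC : IsOrderUnitSpace C u) {z : V} :
    z ∈ interior C ↔ ∃ ε : ℝ, 0 < ε ∧ z - ε • u ∈ C := by
  constructor
  · intro hz
    have hev : ∀ᶠ t in 𝓝 (0 : ℝ), z - t • u ∈ interior C :=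
      (by fun_prop : Continuous fun t : ℝ => z - t • u).continuousAt.eventually_mem
        (by simpa using isOpen_interior.mem_nhds hz)
    obtain ⟨ε, hεC, hε⟩ := ((hev.filter_mono nhdsWithin_le_nhds).and
      (self_mem_nhdsWithin : Ioi (0 : ℝ) ∈ 𝓝[>] 0)).exists
    exact ⟨ε, hε, interior_subset hεC⟩
  · rintro ⟨ε, hε, hz⟩
    refine interior_maximal (fun d hd => ?_) Metric.isOpen_ball (Metric.mem_ball_self hε)
    rw [Metric.mem_ball, dist_comm, dist_eq_norm] at hd
    convert hC.add_mem hz (hC.smul_sub_mem_of_norm_lt _ hd) using 1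
    abel

theorem mem_of_forall_add_smul_mem (hC : IsOrderUnitSpace C u) {z : V}
    (h : ∀ ε : ℝ, 0 < ε → z + ε • u ∈ C) : z ∈ C := by
  refine neg_neg z ▸ hC.archimedean (-z) u hC.unit_mem fun n hn => ?_
  have hn' : (0 : ℝ) < n := Nat.cast_pos.2 hn
  convert hC.smul_mem n hn'.le _ (h (n : ℝ)⁻¹ (inv_pos.2 hn')) using 1
  rw [smul_add, smul_inv_smul₀ hn'.ne']
  module

theorem isClosed (hC : IsOrderUnitSpace C u) : IsClosed C := by
  refine isClosed_of_closure_subset fun z hz => hC.mem_of_forall_add_smul_mem fun ε hε => ?_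
  obtain ⟨a, ha, hza⟩ := Metric.mem_closure_iff.1 hz ε hε
  rw [dist_comm, dist_eq_norm] at hza
  convert hC.add_mem ha (hC.smul_sub_mem_of_norm_lt _ hza) using 1
  abel

theorem smul_mem_interior (hC : IsOrderUnitSpace C u) {c : ℝ} (hc : 0 < c) {z : V}
    (hz : z ∈ interior C) : c • z ∈ interior C := by
  obtain ⟨ε, hε, h⟩ := hC.mem_interior_iff.1 hz
  refine hC.mem_interior_iff.2 ⟨c * ε, by positivity, ?_⟩
  rw [mul_smul, ← smul_sub]
  exact hC.smul_mem c hc.le _ h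

theorem zero_notMem_interior [Nontrivial V] (hC : IsOrderUnitSpace C u) :
    (0 : V) ∉ interior C := by
  intro h0
  obtain ⟨ε, hε, hu⟩ := hC.mem_interior_iff.1 h0
  have hneg : ∀ w : V, -w ∈ C := fun w => by
    obtain ⟨l, hl, hw⟩ := hC.order_unit w
    convert hC.add_mem hw (hC.smul_mem (l / ε) (by positivity) _ hu) using 1
    rw [smul_sub, smul_smul, div_mul_cancel₀ _ hε.ne']
    module
  obtain ⟨w, hw⟩ := exists_ne (0 : V)
  exact hw (hC.eq_of_sub_mem (by simpa using hneg (-w)) (by simpa using hneg w))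

theorem exists_supporting_functional (hC : IsOrderUnitSpace C u)
    (hint : (interior C).Nonempty) {p : V} (hp : p ∈ C) (hpi : p ∉ interior C) :
    ∃ f : V →L[ℝ] ℝ, (∀ a ∈ C, 0 ≤ f a) ∧ f p = 0 ∧ ∀ a ∈ interior C, 0 < f a := by
  obtain ⟨f, hf⟩ := geometric_hahn_banach_point_open hC.convex.interior isOpen_interior hpi
  have hfint : ∀ a ∈ interior C, 0 ≤ f a := by
    intro a ha
    by_contra! hneg
    have h := hf _ (hC.smul_mem_interior (c := (|f p| + 1) / -f a) (div_pos (by positivity) (neg_pos.2 hneg)) ha)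
    rw [map_smul, smul_eq_mul, div_mul_eq_mul_div, div_neg, mul_div_cancel_right₀ _ hneg.ne]
      at h
    linarith [neg_abs_le (f p)]
  have hsub : C ⊆ {a | 0 ≤ f a ∧ f p ≤ f a} :=
    calc C ⊆ closure C := subset_closure
      _ = closure (interior C) :=
        (hC.convex.closure_interior_eq_closure_of_nonempty_interior hint).symm
      _ ⊆ {a | 0 ≤ f a ∧ f p ≤ f a} := closure_minimal (fun a ha => ⟨hfint a ha, (hf a ha).le⟩)
        ((isClosed_le continuous_const f.continuous).inter
          (isClosed_le continuous_const f.continuous))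
  have hp0 : f p = 0 := le_antisymm (by simpa using (hsub hC.zero_mem).2) (hsub hp).1
  exact ⟨f, fun a ha => (hsub ha).1, hp0, fun a ha => hp0 ▸ hf a ha⟩

end IsOrderUnitSpace

theorem Mratio_nonneg (q p : V) : 0 ≤ Mratio C q p :=
  Real.sInf_nonneg fun _ hb => hb.1.le

theorem Mratio_le {q p : V} {b : ℝ} (hb : 0 < b) (h : b • p - q ∈ C) : Mratio C q p ≤ b :=
  csInf_le ⟨0, fun _ hb => hb.1.le⟩ ⟨hb, h⟩

theorem smul_Mratio_sub_notMem_interior {q p : V} (hM : 0 < Mratio C q p) :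
    Mratio C q p • p - q ∉ interior C := by
  intro h
  have hev : ∀ᶠ b in 𝓝 (Mratio C q p), b • p - q ∈ interior C :=
    (by fun_prop : Continuous fun b : ℝ => b • p - q).continuousAt.eventually_mem
      (isOpen_interior.mem_nhds h)
  obtain ⟨b, hbC, hb⟩ := ((hev.filter_mono nhdsWithin_le_nhds).and (Ioo_mem_nhdsLT hM)).exists
  exact (Mratio_le hb.1 (interior_subset hbC)).not_gt hb.2

theorem ContinuousLinearMap.apply_eq_zero_of_hasDerivAt_of_eventually_mem
    {f : V →L[ℝ] ℝ} (hf : ∀ a ∈ C, 0 ≤ f a) {F : ℝ → V} {F' : V} {t₀ : ℝ}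
    (hF : HasDerivAt F F' t₀) (hmem : ∀ᶠ t in 𝓝 t₀, F t ∈ C) (h₀ : f (F t₀) = 0) :
    f F' = 0 :=
  IsLocalMin.hasDerivAt_eq_zero (f := f ∘ F)
    (hmem.mono fun t ht => by simpa [h₀] using hf _ ht) (f.hasFDerivAt.comp_hasDerivAt t₀ hF)

variable {g : V → V}

theorem hasDerivAt_add_smul_of_tendsto {x z L : V}
    (h : Tendsto (fun t : ℝ => t⁻¹ • (g (x + t • z) - g x)) (𝓝[≠] 0) (𝓝 L)) :
    HasDerivAt (fun t : ℝ => g (x + t • z)) L 0 := by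
  rw [hasDerivAt_iff_tendsto_slope, slope_fun_def]
  simpa using h

theorem IsAntihomogeneous.hasDerivAt_add_smul_self (hanti : IsAntihomogeneous C g) {x : V}
    (hx : x ∈ interior C) : HasDerivAt (fun t : ℝ => g (x + t • x)) (-g x) 0 := by
  have hd : HasDerivAt (fun t : ℝ => (1 + t)⁻¹ • g x) (-g x) 0 := by
    simpa using (((hasDerivAt_id (0 : ℝ)).const_add 1).inv (by norm_num)).smul_const (g x)
  refine hd.congr_of_eventuallyEq ?_
  filter_upwards [Ioi_mem_nhds (by norm_num : (-1 : ℝ) < 0)] with t ht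
  rw [show x + t • x = (1 + t) • x by module, hanti _ (by linarith [mem_Ioi.1 ht]) x hx]

namespace IsOrderUnitSpace

theorem exists_smul_sub_mem_of_mem_interior (hC : IsOrderUnitSpace C u) {p : V}
    (hp : p ∈ interior C) (q : V) : ∃ b : ℝ, 0 < b ∧ b • p - q ∈ C := by
  obtain ⟨ε, hε, h⟩ := hC.mem_interior_iff.1 hp
  refine ⟨(‖q‖ + 1) / ε, by positivity, ?_⟩
  convert hC.add_mem (hC.smul_mem ((‖q‖ + 1) / ε) (by positivity) _ h)
    (hC.smul_sub_mem_of_norm_lt q (lt_add_one _)) using 1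
  rw [smul_sub, smul_smul, div_mul_cancel₀ _ hε.ne']
  abel

theorem smul_Mratio_sub_mem (hC : IsOrderUnitSpace C u) {q p : V} (hp : p ∈ C)
    (hne : ∃ b : ℝ, 0 < b ∧ b • p - q ∈ C) : Mratio C q p • p - q ∈ C := by
  have hclosed : IsClosed {b : ℝ | b • p - q ∈ C} := hC.isClosed.preimage (by fun_prop)
  have hIoi : Ioi (Mratio C q p) ⊆ {b : ℝ | b • p - q ∈ C} := by
    intro b hb
    obtain ⟨b', hb', hb'b⟩ := exists_lt_of_csInf_lt hne hb
    show b • p - q ∈ C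
    convert hC.add_mem hb'.2 (hC.smul_mem (b - b') (by linarith) p hp) using 1
    module
  rw [← hclosed.closure_subset_iff, closure_Ioi] at hIoi
  exact hIoi self_mem_Ici

theorem Mratio_pos [Nontrivial V] (hC : IsOrderUnitSpace C u) {q p : V}
    (hq : q ∈ interior C) (hp : p ∈ C) (hne : ∃ b : ℝ, 0 < b ∧ b • p - q ∈ C) :
    0 < Mratio C q p := by
  refine (Mratio_nonneg q p).lt_of_ne fun h0 => hC.zero_notMem_interior ?_
  have hq0 : q = 0 :=
    hC.eq_of_sub_mem (by simpa using interior_subset hq)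
      (by simpa [← h0] using hC.smul_Mratio_sub_mem hp hne)
  exact hq0 ▸ hq

theorem smul_map_sub_mem_iff (hC : IsOrderUnitSpace C u) (hanti : IsAntihomogeneous C g)
    (hmor : IsOrderAntimorphism C g) {p q : V} (hp : p ∈ interior C) (hq : q ∈ interior C)
    {b : ℝ} (hb : 0 < b) : b • g p - g q ∈ C ↔ b • q - p ∈ C := by
  have h := hmor (b⁻¹ • p) (hC.smul_mem_interior (inv_pos.2 hb) hp) q hq
  rw [hanti _ (inv_pos.2 hb) p hp, inv_inv] at h
  rw [← h, ← hC.smul_mem_iff hb, smul_sub, smul_inv_smul₀ hb.ne']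

theorem Mratio_map (hC : IsOrderUnitSpace C u) (hanti : IsAntihomogeneous C g)
    (hmor : IsOrderAntimorphism C g) {p q : V} (hp : p ∈ interior C) (hq : q ∈ interior C) :
    Mratio C (g q) (g p) = Mratio C p q := by
  unfold Mratio
  congr 1
  ext b
  exact and_congr_right fun hb => hC.smul_map_sub_mem_iff hanti hmor hp hq hb

theorem eventually_smul_map_add_smul_sub_mem (hC : IsOrderUnitSpace C u)
    (hanti : IsAntihomogeneous C g) (hmor : IsOrderAntimorphism C g) {x y : V}
    (hx : x ∈ interior C) (hy : y ∈ interior C) {β : ℝ} (hβ : 0 < β) (h : β • y - x ∈ C) :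
    ∀ᶠ t in 𝓝 (0 : ℝ), (β + t) • g (x + t • y) - g y ∈ C := by
  have hxt : ∀ᶠ t in 𝓝 (0 : ℝ), x + t • y ∈ interior C :=
    (by fun_prop : Continuous fun t : ℝ => x + t • y).continuousAt.eventually_mem
      (by simpa using isOpen_interior.mem_nhds hx)
  filter_upwards [hxt, Ioi_mem_nhds (neg_lt_zero.2 hβ)] with t ht hβt
  rw [hC.smul_map_sub_mem_iff hanti hmor ht hy (by linarith [mem_Ioi.1 hβt])]
  convert h using 1
  module

theorem Mratio_eq_one_of_hasDerivAt [Nontrivial V] (hC : IsOrderUnitSpace C u)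
    (hanti : IsAntihomogeneous C g) (hmor : IsOrderAntimorphism C g) {x y : V}
    (hx : x ∈ interior C) (hy : y ∈ interior C) (hgx : g x ∈ interior C)
    (hgy : g y ∈ interior C) (hd : HasDerivAt (fun t : ℝ => g (x + t • y)) (-g y) 0) :
    Mratio C x y = 1 := by
  set β := Mratio C x y
  have hβ : Mratio C (g y) (g x) = β := hC.Mratio_map hanti hmor hx hy
  have hne := hC.exists_smul_sub_mem_of_mem_interior hgx (g y)
  have hβpos : 0 < β := hβ ▸ hC.Mratio_pos hgy (interior_subset hgx) hne
  obtain ⟨f, hfC, hf₀, hfpos⟩ := hC.exists_supporting_functional ⟨x, hx⟩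
    (hβ ▸ hC.smul_Mratio_sub_mem (interior_subset hgx) hne)
    (hβ ▸ smul_Mratio_sub_notMem_interior (hβ ▸ hβpos))
  have hβyx : β • y - x ∈ C := hC.smul_Mratio_sub_mem (interior_subset hy)
    (hC.exists_smul_sub_mem_of_mem_interior hy x)
  have hcurve : HasDerivAt (fun t : ℝ => (β + t) • g (x + t • y) - g y) (β • -g y + g x) 0 := by
    simpa using (((hasDerivAt_id (0 : ℝ)).const_add β).smul hd).sub_const (g y)
  have hf₁ := f.apply_eq_zero_of_hasDerivAt_of_eventually_mem hfC hcurve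
    (hC.eventually_smul_map_add_smul_sub_mem hanti hmor hx hy hβpos hβyx) (by simpa using hf₀)
  simp only [map_add, map_neg, map_smul, map_sub, smul_eq_mul] at hf₀ hf₁
  have h : (β - 1) * ((β + 1) * f (g y)) = 0 := by linear_combination hf₀ - β * hf₁
  exact sub_eq_zero.1 ((mul_eq_zero.1 h).resolve_right (mul_pos (by linarith) (hfpos _ hgy)).ne')

theorem neg_mem_of_hasDerivAt (hC : IsOrderUnitSpace C u) (hmor : IsOrderAntimorphism C g)
    {x z L : V} (hx : x ∈ interior C) (hz : z ∈ C)
    (hL : HasDerivAt (fun t : ℝ => g (x + t • z)) L 0) : -L ∈ C := by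
  have hslope := (hasDerivAt_iff_tendsto_slope.1 hL).mono_left
    (nhdsWithin_mono 0 fun t (ht : t ∈ Ioi 0) => ne_of_gt ht)
  have hxt : ∀ᶠ t in 𝓝 (0 : ℝ), x + t • z ∈ interior C :=
    (by fun_prop : Continuous fun t : ℝ => x + t • z).continuousAt.eventually_mem
      (by simpa using isOpen_interior.mem_nhds hx)
  refine Set.mem_neg.1 (hC.isClosed.neg.mem_of_tendsto hslope ?_)
  filter_upwards [eventually_nhdsWithin_of_eventually_nhds hxt, self_mem_nhdsWithin]
    with t ht (htpos : 0 < t)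
  have hdec : g x - g (x + t • z) ∈ C :=
    (hmor x hx _ ht).1 (by simpa using hC.smul_mem t htpos.le z hz)
  simpa [slope_def_module, smul_sub] using hC.smul_mem t⁻¹ (inv_nonneg.2 htpos.le) _ hdec

end IsOrderUnitSpace

theorem symmetry_unique_fixed_point_general
    (C : Set V) (u : V) (hous : IsOrderUnitSpace C u)
    (g : V → V) (hbij : Set.BijOn g (interior C) (interior C))
    (hanti : IsAntihomogeneous C g) (hmor : IsOrderAntimorphism C g)
    (x : V) (hx : x ∈ interior C)
    (G : V ≃ₗ[ℝ] V)
    (hG : ∀ z : V, Tendsto (fun t : ℝ => t⁻¹ • (g (x + t • z) - g x))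
      (𝓝[≠] (0:ℝ)) (𝓝 (-(G z)))) :
    ∀ y ∈ interior C, G.symm (g y) = y → y = x := by
  intro y hy hfix
  rcases subsingleton_or_nontrivial V with hV | hV
  · exact Subsingleton.elim y x
  have hGy : G y = g y := G.eq_symm_apply.1 hfix.symm
  have hGx : G x = g x := neg_injective <|
    (hasDerivAt_add_smul_of_tendsto (hG x)).unique (hanti.hasDerivAt_add_smul_self hx)
  have hM : Mratio C x y = 1 := hous.Mratio_eq_one_of_hasDerivAt hanti hmor hx hy
    (hbij.mapsTo hx) (hbij.mapsTo hy) (hGy ▸ hasDerivAt_add_smul_of_tendsto (hG y))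
  have hyx : y - x ∈ C := by
    simpa [hM] using hous.smul_Mratio_sub_mem (interior_subset hy)
      (hous.exists_smul_sub_mem_of_mem_interior hy x)
  have hxy : x - y ∈ C := (hmor y hy x hx).2 <| by
    simpa [hGx, hGy] using
      hous.neg_mem_of_hasDerivAt hmor hx hyx (hasDerivAt_add_smul_of_tendsto (hG (y - x)))
  exact hous.eq_of_sub_mem hyx hxy

/-- **Proposition** (unique fixed point). The symmetry `S_x = G_x⁻¹ ∘ g` has `x`
as its unique fixed point in `C°`. -/
theorem symmetry_unique_fixed_point
    (C : Set V) (u : V) (hous : IsOrderUnitSpace C u) (hsc : StrictlyConvexCone C)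
    (g : V → V) (hbij : Set.BijOn g (interior C) (interior C))
    (hanti : IsAntihomogeneous C g) (hmor : IsOrderAntimorphism C g)
    (x : V) (hx : x ∈ interior C)
    (G : V ≃ₗ[ℝ] V)
    (hG : ∀ z : V, Tendsto (fun t : ℝ => t⁻¹ • (g (x + t • z) - g x))
      (𝓝[≠] (0:ℝ)) (𝓝 (-(G z)))) :
    ∀ y ∈ interior C, G.symm (g y) = y → y = x :=
  symmetry_unique_fixed_point_general C u hous g hbij hanti hmor x hx G hG
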